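/- Let λ > λ_* and let v ∈ C²(ℝ^N) with v(x) → 0 as |x| → ∞, satisfying v·(Δv + f_∞ v − λv) ≥ 0 on ℝ^N. If additionally v ∈ L^∞(ℝ^N), then v ∈ L^p(ℝ^N) for every p ∈ [1, ∞). -/

import Mathlib

open MeasureTheory Filter Topology

/-- The Laplacian of `u : ℝ^N → ℝ`, as the sum of second partial derivatives. -/
noncomputable def lap {N : ℕ} (u : EuclideanSpace ℝ (Fin N) → ℝ)
    (x : EuclideanSpace ℝ (Fin N)) : ℝ :=
  ∑ i, fderiv ℝ (fun y => fderiv ℝ u y (EuclideanSpace.single i 1)) x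
    (EuclideanSpace.single i 1)

open scoped RealInnerProductSpace

/-!
Far out, `f < lam₀ < lam`, so `v²` is a subsolution: `Δ(v²) ≥ 2 v Δv ≥ 2 (lam - f) v² ≥ κ v²`
with `κ = 2 (lam - lam₀) > 0`. The barrier `w = (1 + ‖x‖²)^(-t)` satisfies `Δw ≤ κ w` far out, so
once `A` is large enough for `v² ≤ A w` on a compact set, `v² - A w` cannot have a positive
maximum. Hence `v² ≤ A (1 + ‖x‖²)^(-t)`; with `t = N + 1` this makes `|v|^p` integrable for
every `p ≥ 1`.
-/

theorem IsLocalMax.deriv_deriv_nonpos {f : ℝ → ℝ} {a : ℝ} (h : IsLocalMax f a)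
    (hc : ContinuousAt f a) : deriv (deriv f) a ≤ 0 := by
  by_contra! hpos
  have hmin : IsLocalMin f a := isLocalMin_of_deriv_deriv_pos hpos h.deriv_eq_zero hc
  have hconst : f =ᶠ[𝓝 a] fun _ => f a := (h.and hmin).mono fun _ hx => le_antisymm hx.1 hx.2
  have hderiv : deriv f =ᶠ[𝓝 a] fun _ => 0 :=
    hconst.eventuallyEq_nhds.mono fun _ hx => by rw [hx.deriv_eq, deriv_const]
  rw [hderiv.deriv_eq, deriv_const] at hpos
  exact lt_irrefl _ hpos

theorem ContDiff.differentiable_fderiv_apply {E : Type*} [NormedAddCommGroup E]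
    [NormedSpace ℝ E] {u : E → ℝ} (hu : ContDiff ℝ 2 u) (e : E) :
    Differentiable ℝ fun y => fderiv ℝ u y e :=
  ((hu.fderiv_right le_rfl).clm_apply contDiff_const).differentiable one_ne_zero

theorem IsCompact.exists_le_const_mul {X : Type*} [TopologicalSpace X] {K : Set X}
    (hK : IsCompact K) {u w : X → ℝ} (hu : ContinuousOn u K) (hw : ContinuousOn w K)
    (hpos : ∀ x ∈ K, 0 < w x) : ∃ A, 0 ≤ A ∧ ∀ x ∈ K, u x ≤ A * w x := by
  obtain ⟨B, hB⟩ := hK.bddAbove_image (hu.div hw fun x hx => (hpos x hx).ne')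
  refine ⟨max B 0, le_max_right _ _, fun x hx => ?_⟩
  calc u x = u x / w x * w x := (div_mul_cancel₀ _ (hpos x hx).ne').symm
    _ ≤ max B 0 * w x :=
      mul_le_mul_of_nonneg_right ((hB ⟨x, hx, rfl⟩).trans (le_max_left _ _)) (hpos x hx).le

theorem memLp_of_sq_le_mul_one_add_norm_sq_rpow_neg {E : Type*} [NormedAddCommGroup E]
    [NormedSpace ℝ E] [FiniteDimensional ℝ E] [MeasurableSpace E] [BorelSpace E]
    {μ : Measure E} [μ.IsAddHaarMeasure] {g : E → ℝ} (hg : AEStronglyMeasurable g μ)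
    {A t p : ℝ} (hp : 0 < p) (htp : (Module.finrank ℝ E : ℝ) < t * p)
    (hbound : ∀ x, g x ^ 2 ≤ A * (1 + ‖x‖ ^ 2) ^ (-t)) :
    MemLp g (ENNReal.ofReal p) μ := by
  have hA : 0 ≤ A := by simpa using (sq_nonneg _).trans (hbound 0)
  have hp0 : ENNReal.ofReal p ≠ 0 := by simpa using hp
  refine (integrable_norm_rpow_iff hg hp0 ENNReal.ofReal_ne_top).mp ?_
  rw [ENNReal.toReal_ofReal hp.le]
  refine ((integrable_rpow_neg_one_add_norm_sq htp).const_mul (A ^ (p / 2))).mono'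
    (hg.norm.aemeasurable.pow_const p).aestronglyMeasurable (Eventually.of_forall fun x => ?_)
  have hG : 0 ≤ 1 + ‖x‖ ^ 2 := by positivity
  calc ‖‖g x‖ ^ p‖ = (g x ^ 2) ^ (p / 2) := by
        rw [Real.norm_of_nonneg (by positivity), ← sq_abs, ← Real.rpow_natCast,
          ← Real.rpow_mul (abs_nonneg _), Real.norm_eq_abs]
        ring_nf
    _ ≤ (A * (1 + ‖x‖ ^ 2) ^ (-t)) ^ (p / 2) :=
        Real.rpow_le_rpow (sq_nonneg _) (hbound x) (by positivity)
    _ = A ^ (p / 2) * (1 + ‖x‖ ^ 2) ^ (-(t * p) / 2) := by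
        rw [Real.mul_rpow hA (by positivity), ← Real.rpow_mul hG]
        ring_nf

section OneAddNormSqRpow

variable {E : Type*} [NormedAddCommGroup E] [InnerProductSpace ℝ E]

theorem hasFDerivAt_one_add_norm_sq_rpow (s : ℝ) (y : E) :
    HasFDerivAt (fun z : E => (1 + ‖z‖ ^ 2) ^ s)
      ((s * (1 + ‖y‖ ^ 2) ^ (s - 1)) • (2 • innerSL ℝ y)) y :=
  (Real.hasDerivAt_rpow_const (Or.inl (by positivity))).comp_hasFDerivAt y
    ((hasStrictFDerivAt_norm_sq y).hasFDerivAt.const_add 1)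

theorem fderiv_one_add_norm_sq_rpow_apply (s : ℝ) (e : E) :
    (fun y => fderiv ℝ (fun z : E => (1 + ‖z‖ ^ 2) ^ s) y e)
      = fun y => 2 * s * (1 + ‖y‖ ^ 2) ^ (s - 1) * ⟪e, y⟫ := by
  ext y
  rw [(hasFDerivAt_one_add_norm_sq_rpow s y).fderiv]
  simp only [smul_apply, innerSL_apply_apply, smul_eq_mul, nsmul_eq_mul,
    real_inner_comm e y]
  ring

theorem fderiv_fderiv_one_add_norm_sq_rpow_apply (s : ℝ) (x e : E) :
    fderiv ℝ (fun y => fderiv ℝ (fun z : E => (1 + ‖z‖ ^ 2) ^ s) y e) x e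
      = 4 * s * (s - 1) * (1 + ‖x‖ ^ 2) ^ (s - 2) * ⟪x, e⟫ ^ 2
        + 2 * s * (1 + ‖x‖ ^ 2) ^ (s - 1) * ‖e‖ ^ 2 := by
  have h : HasFDerivAt (fun y => 2 * s * (1 + ‖y‖ ^ 2) ^ (s - 1) * ⟪e, y⟫) _ x :=
    ((hasFDerivAt_one_add_norm_sq_rpow (s - 1) x).const_mul (2 * s)).fun_mul
    (innerSL ℝ e).hasFDerivAt
  rw [fderiv_one_add_norm_sq_rpow_apply, h.fderiv]
  simp only [add_apply, smul_apply, innerSL_apply_apply,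
    smul_eq_mul, nsmul_eq_mul, real_inner_self_eq_norm_sq, real_inner_comm e x]
  rw [show s - 1 - 1 = s - 2 by ring]
  ring

end OneAddNormSqRpow

section Laplacian

variable {N : ℕ}

theorem lap_nonpos_of_isLocalMax {z : EuclideanSpace ℝ (Fin N) → ℝ}
    {x₀ : EuclideanSpace ℝ (Fin N)} (hz : ContDiff ℝ 2 z) (hmax : IsLocalMax z x₀) :
    lap z x₀ ≤ 0 := by
  refine Finset.sum_nonpos fun i _ => ?_
  set e : EuclideanSpace ℝ (Fin N) := EuclideanSpace.single i 1
  have hline : ∀ s : ℝ, HasDerivAt (fun s : ℝ => x₀ + s • e) e s := fun s => by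
    simpa using ((hasDerivAt_id s).smul_const e).const_add x₀
  have hfirst : deriv (fun s : ℝ => z (x₀ + s • e)) = fun s => fderiv ℝ z (x₀ + s • e) e :=
    funext fun s =>
      ((hz.differentiable two_ne_zero _).hasFDerivAt.comp_hasDerivAt s (hline s)).deriv
  have hsecond : deriv (deriv fun s : ℝ => z (x₀ + s • e)) 0
      = fderiv ℝ (fun y => fderiv ℝ z y e) x₀ e := by
    have := (hz.differentiable_fderiv_apply e _).hasFDerivAt.comp_hasDerivAt 0 (hline 0)
    rw [hfirst]
    simpa [Function.comp_def] using this.deriv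
  rw [← hsecond]
  have hcont : Continuous fun s : ℝ => x₀ + s • e := by fun_prop
  refine IsLocalMax.deriv_deriv_nonpos ?_ (hz.continuous.comp hcont).continuousAt
  exact IsLocalMax.comp_continuous (by simpa using hmax) hcont.continuousAt

theorem nonpos_of_lap_pos {z : EuclideanSpace ℝ (Fin N) → ℝ} (hz : ContDiff ℝ 2 z)
    (hdecay : ∀ ε > 0, ∀ᶠ x in cocompact _, z x < ε) (hlap : ∀ x, 0 < z x → 0 < lap z x)
    (x : EuclideanSpace ℝ (Fin N)) : z x ≤ 0 := by
  by_contra! hx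
  obtain ⟨x₀, hx₀⟩ := hz.continuous.exists_forall_ge' x ((hdecay _ hx).mono fun _ hy => hy.le)
  have hmax : IsLocalMax z x₀ := Eventually.of_forall hx₀
  exact (hlap x₀ (hx.trans_le (hx₀ x))).not_ge (lap_nonpos_of_isLocalMax hz hmax)

theorem lap_sub_const_mul {u w : EuclideanSpace ℝ (Fin N) → ℝ} (hu : ContDiff ℝ 2 u)
    (hw : ContDiff ℝ 2 w) (A : ℝ) (x : EuclideanSpace ℝ (Fin N)) :
    lap (fun y => u y - A * w y) x = lap u x - A * lap w x := by
  have hu1 := hu.differentiable two_ne_zero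
  have hw1 := hw.differentiable two_ne_zero
  have hfd : ∀ e, (fun y => fderiv ℝ (fun y' => u y' - A * w y') y e)
      = fun y => fderiv ℝ u y e - A * fderiv ℝ w y e := fun e => funext fun y => by
    rw [fderiv_fun_sub (hu1 y) ((hw1 y).const_mul A), fderiv_const_mul (hw1 y)]
    simp
  simp only [lap, hfd, Finset.mul_sum, ← Finset.sum_sub_distrib]
  refine Finset.sum_congr rfl fun i _ => ?_
  have hu2 := hu.differentiable_fderiv_apply (EuclideanSpace.single i 1) x
  have hw2 := hw.differentiable_fderiv_apply (EuclideanSpace.single i 1) x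
  rw [fderiv_fun_sub hu2 (hw2.const_mul A), fderiv_const_mul hw2]
  simp

theorem lap_mul_self {u : EuclideanSpace ℝ (Fin N) → ℝ} (hu : ContDiff ℝ 2 u)
    (x : EuclideanSpace ℝ (Fin N)) :
    lap (fun y => u y * u y) x
      = 2 * u x * lap u x + 2 * ∑ i, fderiv ℝ u x (EuclideanSpace.single i 1) ^ 2 := by
  have hu1 := hu.differentiable two_ne_zero
  have hfd : ∀ e, (fun y => fderiv ℝ (fun y' => u y' * u y') y e)
      = fun y => 2 * (u y * fderiv ℝ u y e) := fun e => funext fun y => by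
    rw [fderiv_fun_mul (hu1 y) (hu1 y)]
    simp only [add_apply, smul_apply, smul_eq_mul]
    ring
  simp only [lap, hfd, Finset.mul_sum, ← Finset.sum_add_distrib]
  refine Finset.sum_congr rfl fun i _ => ?_
  have hu2 := hu.differentiable_fderiv_apply (EuclideanSpace.single i 1) x
  rw [fderiv_const_mul ((hu1 x).fun_mul hu2), fderiv_fun_mul (hu1 x) hu2]
  simp only [smul_apply, add_apply, smul_eq_mul]
  ring

theorem two_mul_mul_lap_le_lap_mul_self {u : EuclideanSpace ℝ (Fin N) → ℝ}
    (hu : ContDiff ℝ 2 u) (x : EuclideanSpace ℝ (Fin N)) :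
    2 * u x * lap u x ≤ lap (fun y => u y * u y) x := by
  rw [lap_mul_self hu]
  have := Finset.sum_nonneg fun i (_ : i ∈ Finset.univ) =>
    sq_nonneg (fderiv ℝ u x (EuclideanSpace.single i 1))
  linarith

theorem lap_one_add_norm_sq_rpow (s : ℝ) (x : EuclideanSpace ℝ (Fin N)) :
    lap (fun y => (1 + ‖y‖ ^ 2) ^ s) x
      = 4 * s * (s - 1) * (1 + ‖x‖ ^ 2) ^ (s - 2) * ‖x‖ ^ 2
        + 2 * s * N * (1 + ‖x‖ ^ 2) ^ (s - 1) := by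
  simp only [lap, fderiv_fderiv_one_add_norm_sq_rpow_apply, EuclideanSpace.inner_single_right,
    PiLp.norm_single, Finset.sum_add_distrib, EuclideanSpace.real_norm_sq_eq x]
  simp [Finset.mul_sum]
  ring

theorem lap_one_add_norm_sq_rpow_neg_le {t κ : ℝ} (ht : 0 ≤ t) {x : EuclideanSpace ℝ (Fin N)}
    (hx : 4 * t * (t + 1) ≤ κ * (1 + ‖x‖ ^ 2)) :
    lap (fun y => (1 + ‖y‖ ^ 2) ^ (-t)) x ≤ κ * (1 + ‖x‖ ^ 2) ^ (-t) := by
  rw [lap_one_add_norm_sq_rpow]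
  set G := 1 + ‖x‖ ^ 2
  have hG : 0 < G := by positivity
  have hG2 : G ^ (-t - 2) * ‖x‖ ^ 2 ≤ G ^ (-t - 1) := by
    calc G ^ (-t - 2) * ‖x‖ ^ 2 ≤ G ^ (-t - 2) * G := by gcongr; simp [G]
      _ = G ^ (-t - 1) := by rw [← Real.rpow_add_one hG.ne']; ring_nf
  have hG1 : G ^ (-t - 1) * G = G ^ (-t) := by rw [← Real.rpow_add_one hG.ne']; ring_nf
  calc 4 * -t * (-t - 1) * G ^ (-t - 2) * ‖x‖ ^ 2 + 2 * -t * N * G ^ (-t - 1)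
      ≤ 4 * t * (t + 1) * G ^ (-t - 1) := by
        nlinarith [mul_le_mul_of_nonneg_left hG2 (by positivity : 0 ≤ 4 * t * (t + 1)),
          (by positivity : (0 : ℝ) ≤ t * N * G ^ (-t - 1))]
    _ ≤ κ * G * G ^ (-t - 1) := by gcongr
    _ = κ * G ^ (-t) := by rw [mul_assoc, mul_comm G, hG1]

theorem exists_le_const_mul_of_lap {u w : EuclideanSpace ℝ (Fin N) → ℝ}
    (hu : ContDiff ℝ 2 u) (hw : ContDiff ℝ 2 w) (hu0 : Tendsto u (cocompact _) (𝓝 0))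
    (hwpos : ∀ x, 0 < w x) {κ : ℝ} (hκ : 0 < κ)
    (hlap : ∀ᶠ x in cocompact _, κ * u x ≤ lap u x ∧ lap w x ≤ κ * w x) :
    ∃ A, ∀ x, u x ≤ A * w x := by
  obtain ⟨K, hK, hKlap⟩ := hasBasis_cocompact.eventually_iff.mp hlap
  obtain ⟨A, hA, huK⟩ := hK.exists_le_const_mul hu.continuous.continuousOn
    hw.continuous.continuousOn fun x _ => hwpos x
  refine ⟨A, fun x => sub_nonpos.mp
    (nonpos_of_lap_pos (hu.sub (contDiff_const.mul hw)) (fun ε hε => ?_) (fun y hy => ?_) x)⟩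
  · filter_upwards [hu0.eventually (gt_mem_nhds hε)] with y hy
    nlinarith [hwpos y]
  · -- a point where `u - A w > 0` lies off `K`, so there `Δ(u - A w) ≥ κ (u - A w) > 0`
    obtain ⟨hu', hw'⟩ := hKlap fun hyK => by linarith [huK y hyK]
    rw [lap_sub_const_mul hu hw]
    nlinarith

end Laplacian

theorem stmt3_general {N : ℕ}
    (f : EuclideanSpace ℝ (Fin N) → ℝ) (hfb : ∃ M, ∀ x, |f x| ≤ M)
    (lamStar lam : ℝ) (hstar : lamStar = limsup f (cocompact (EuclideanSpace ℝ (Fin N))))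
    (hlam : lamStar < lam)
    (v : EuclideanSpace ℝ (Fin N) → ℝ) (hv : ContDiff ℝ 2 v)
    (hv0 : Tendsto v (cocompact (EuclideanSpace ℝ (Fin N))) (nhds 0))
    (hineq : ∀ x, 0 ≤ v x * (lap v x + f x * v x - lam * v x)) :
    ∀ p : ℝ, 1 ≤ p → MemLp v (ENNReal.ofReal p) volume := by
  intro p hp
  obtain ⟨lam₀, hlam₀star, hlam₀lam⟩ := exists_between hlam
  obtain ⟨M, hM⟩ := hfb
  have hf_lt : ∀ᶠ x in cocompact _, f x < lam₀ :=
    eventually_lt_of_limsup_lt (hstar ▸ hlam₀star)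
      (isBoundedUnder_of ⟨M, fun x => (le_abs_self _).trans (hM x)⟩)
  set κ := 2 * (lam - lam₀)
  set t : ℝ := N + 1
  have hnorm : Tendsto (fun x : EuclideanSpace ℝ (Fin N) => 1 + ‖x‖ ^ 2) (cocompact _) atTop :=
    tendsto_atTop_add_const_left _ 1
      ((tendsto_pow_atTop two_ne_zero).comp tendsto_norm_cocompact_atTop)
  have hlarge : ∀ᶠ x in cocompact _, 4 * t * (t + 1) ≤ κ * (1 + ‖x‖ ^ 2) :=
    (hnorm.const_mul_atTop (by linarith)).eventually_ge_atTop _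
  have hlap : ∀ᶠ x in cocompact _, κ * (v x * v x) ≤ lap (fun y => v y * v y) x ∧
      lap (fun y => (1 + ‖y‖ ^ 2) ^ (-t)) x ≤ κ * (1 + ‖x‖ ^ 2) ^ (-t) := by
    filter_upwards [hf_lt, hlarge] with x hfx hx
    refine ⟨?_, lap_one_add_norm_sq_rpow_neg_le (by positivity) hx⟩
    nlinarith [hineq x, two_mul_mul_lap_le_lap_mul_self hv x,
      mul_nonneg (sub_nonneg.mpr hfx.le) (mul_self_nonneg (v x))]
  obtain ⟨A, hA⟩ := exists_le_const_mul_of_lap (hv.mul hv)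
    ((contDiff_const.add (contDiff_norm_sq ℝ)).rpow_const_of_ne fun y => by positivity)
    (by simpa using hv0.mul hv0) (fun x => by positivity) (by linarith) hlap
  refine memLp_of_sq_le_mul_one_add_norm_sq_rpow_neg hv.continuous.aestronglyMeasurable
    (by linarith) ?_ fun x => by simpa [sq] using hA x
  rw [finrank_euclideanSpace_fin]
  calc (N : ℝ) < t := by linarith
    _ ≤ t * p := le_mul_of_one_le_right (by positivity) hp

/-- if `λ > λ_* = limsup_{|x|→∞} f_∞(x)` and the bounded `C²` function `v`,
vanishing at infinity, satisfies `v·(Δv + f_∞ v − λ v) ≥ 0` on `ℝ^N`, then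
`v ∈ L^p(ℝ^N)` for every `p ∈ [1, ∞)`. -/
theorem stmt3 {N : ℕ} (hN : 1 ≤ N)
    (f : EuclideanSpace ℝ (Fin N) → ℝ) (hfc : Continuous f) (hfb : ∃ M, ∀ x, |f x| ≤ M)
    (lamStar lam : ℝ) (hstar : lamStar = limsup f (cocompact (EuclideanSpace ℝ (Fin N))))
    (hlam : lamStar < lam)
    (v : EuclideanSpace ℝ (Fin N) → ℝ) (hv : ContDiff ℝ 2 v)
    (hvb : ∃ M, ∀ x, |v x| ≤ M)
    (hv0 : Tendsto v (cocompact (EuclideanSpace ℝ (Fin N))) (nhds 0))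
    (hineq : ∀ x, 0 ≤ v x * (lap v x + f x * v x - lam * v x)) :
    ∀ p : ℝ, 1 ≤ p → MemLp v (ENNReal.ofReal p) volume :=
  stmt3_general f hfb lamStar lam hstar hlam v hv hv0 hineq
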